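/- arXiv:nlin/0209014 — 8 statements merged into one kernel-verified Lean document; each statement's English description precedes it below -/
import Mathlib

section
/- Let U ⊆ ℝⁿ be open and, for each i = 1,…,n, let φ_i^1,…,φ_i^n : ℝ → ℝ be smooth functions. Assume that for every λ = (λ_1,…,λ_n) ∈ U the n×n matrix φ(λ) with entries φ(λ)_{ik} = φ_i^k(λ_i) (the i-th row depending only on λ_i) is invertible. Define the geodesic Stäckel Hamiltonians E_r(λ,μ) = Σ_{i=1}^n (φ(λ)⁻¹)_{ri} μ_i² for r = 1,…,n. Then for all r, s ∈ {1,…,n}, the canonical Poisson bracket {E_r, E_s} vanishes identically on U × ℝⁿ. -/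
open Finset

/-- The canonical Poisson bracket of two functions on `(Fin n → ℝ) × (Fin n → ℝ)`
with coordinates `(λ, μ)`:
`{F,G} = Σ_i (∂F/∂λ_i ∂G/∂μ_i − ∂F/∂μ_i ∂G/∂λ_i)`. -/
noncomputable def poissonBracket {n : ℕ} (F G : (Fin n → ℝ) × (Fin n → ℝ) → ℝ)
    (z : (Fin n → ℝ) × (Fin n → ℝ)) : ℝ :=
  ∑ i : Fin n,
    (fderiv ℝ F z (Pi.single i 1, 0) * fderiv ℝ G z (0, Pi.single i 1)
      - fderiv ℝ F z (0, Pi.single i 1) * fderiv ℝ G z (Pi.single i 1, 0))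

/-- The Stäckel matrix `φ(λ)_{ik} = φ_i^k(λ_i)`. -/
noncomputable def stackelMatrix {n : ℕ} (φ : Fin n → Fin n → ℝ → ℝ)
    (x : Fin n → ℝ) : Matrix (Fin n) (Fin n) ℝ :=
  Matrix.of fun i k => φ i k (x i)

section Aux

variable {n : ℕ}

/-- determinant of a matrix with differentiable entries is differentiable -/
lemma diffAt_det {m : Type*} [Fintype m] [DecidableEq m]
    (A : (Fin n → ℝ) → Matrix m m ℝ) (x : Fin n → ℝ)
    (h : ∀ a b, DifferentiableAt ℝ (fun y => A y a b) x) :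
    DifferentiableAt ℝ (fun y => (A y).det) x := by
  simp only [Matrix.det_apply']
  refine DifferentiableAt.fun_sum fun σ _ => DifferentiableAt.const_mul ?_ _
  exact (HasFDerivAt.finset_prod (u := Finset.univ)
    (fun a _ => (h (σ a) a).hasFDerivAt)).differentiableAt

lemma hasFDerivAt_entry (φ : Fin n → Fin n → ℝ → ℝ) (hφ : ∀ i k, ContDiff ℝ (⊤ : ℕ∞) (φ i k))
    (r m : Fin n) (x : Fin n → ℝ) :
    HasFDerivAt (fun y : Fin n → ℝ => stackelMatrix φ y r m)
      (deriv (φ r m) (x r) •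
        (ContinuousLinearMap.proj (R := ℝ) (φ := fun _ : Fin n => ℝ) r)) x :=
  (((hφ r m).differentiable (by simp) (x r)).hasDerivAt).comp_hasFDerivAt x
    (ContinuousLinearMap.proj (R := ℝ) (φ := fun _ : Fin n => ℝ) r).hasFDerivAt

lemma diffAt_entry (φ : Fin n → Fin n → ℝ → ℝ) (hφ : ∀ i k, ContDiff ℝ (⊤ : ℕ∞) (φ i k))
    (r m : Fin n) (x : Fin n → ℝ) :
    DifferentiableAt ℝ (fun y : Fin n → ℝ => stackelMatrix φ y r m) x :=
  (hasFDerivAt_entry φ hφ r m x).differentiableAt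

lemma diffAt_inv_entry (φ : Fin n → Fin n → ℝ → ℝ) (hφ : ∀ i k, ContDiff ℝ (⊤ : ℕ∞) (φ i k))
    (x : Fin n → ℝ) (hx : IsUnit (stackelMatrix φ x)) (a b : Fin n) :
    DifferentiableAt ℝ (fun y => (stackelMatrix φ y)⁻¹ a b) x := by
  have hfun : (fun y => (stackelMatrix φ y)⁻¹ a b)
      = fun y => ((stackelMatrix φ y).det)⁻¹ * (stackelMatrix φ y).adjugate a b := by
    funext y
    rw [Matrix.inv_def, Matrix.smul_apply, Ring.inverse_eq_inv', smul_eq_mul]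
  rw [hfun]
  have hdet : DifferentiableAt ℝ (fun y => (stackelMatrix φ y).det) x :=
    diffAt_det _ x (fun a b => diffAt_entry φ hφ a b x)
  have hne : (stackelMatrix φ x).det ≠ 0 :=
    ((Matrix.isUnit_iff_isUnit_det _).mp hx).ne_zero
  refine (hdet.inv hne).mul ?_
  have : (fun y => (stackelMatrix φ y).adjugate a b)
      = fun y => ((stackelMatrix φ y).updateRow b (Pi.single a 1)).det := by
    funext y; rw [Matrix.adjugate_apply]
  rw [this]
  refine diffAt_det _ x (fun c d => ?_)
  by_cases hc : c = b
  · simp only [Matrix.updateRow_apply, hc, if_pos rfl]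
    exact differentiableAt_const _
  · simp only [Matrix.updateRow_apply, if_neg hc]
    exact diffAt_entry φ hφ c d x

lemma fderiv_inv_entry (φ : Fin n → Fin n → ℝ → ℝ) (hφ : ∀ i k, ContDiff ℝ (⊤ : ℕ∞) (φ i k))
    (U : Set (Fin n → ℝ)) (hU : IsOpen U) (hinv : ∀ x ∈ U, IsUnit (stackelMatrix φ x))
    (x : Fin n → ℝ) (hx : x ∈ U) (i r j : Fin n) :
    fderiv ℝ (fun y => (stackelMatrix φ y)⁻¹ r j) x (Pi.single i 1)
      = -((stackelMatrix φ x)⁻¹ r i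
          * ∑ m, deriv (φ i m) (x i) * (stackelMatrix φ x)⁻¹ m j) := by
  classical
  set N : (Fin n → ℝ) → Matrix (Fin n) (Fin n) ℝ := fun y => (stackelMatrix φ y)⁻¹ with hN
  have hdetx : IsUnit (stackelMatrix φ x).det :=
    (Matrix.isUnit_iff_isUnit_det _).mp (hinv x hx)
  have hNdiff : ∀ a b, DifferentiableAt ℝ (fun y => N y a b) x :=
    fun a b => diffAt_inv_entry φ hφ x (hinv x hx) a b
  -- differentiate the identity M * N = 1 on U
  have hsum : ∀ a k, ∑ m, stackelMatrix φ x a m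
        * fderiv ℝ (fun y => N y m k) x (Pi.single i 1)
      = -(if a = i then (∑ m, deriv (φ i m) (x i) * N x m k) else 0) := by
    intro a k
    have hid : (fun y => ∑ m, stackelMatrix φ y a m * N y m k)
        =ᶠ[nhds x] fun _ => (1 : Matrix (Fin n) (Fin n) ℝ) a k := by
      filter_upwards [hU.mem_nhds hx] with y hy
      rw [← Matrix.mul_apply,
        Matrix.mul_nonsing_inv _ ((Matrix.isUnit_iff_isUnit_det _).mp (hinv y hy))]
    have hder : HasFDerivAt (fun y => ∑ m, stackelMatrix φ y a m * N y m k)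
        (∑ m, ((stackelMatrix φ x a m) • fderiv ℝ (fun y => N y m k) x
          + (N x m k) • (deriv (φ a m) (x a) •
            (ContinuousLinearMap.proj (R := ℝ) (φ := fun _ : Fin n => ℝ) a)))) x :=
      HasFDerivAt.fun_sum fun m _ =>
        (hasFDerivAt_entry φ hφ a m x).mul ((hNdiff m k).hasFDerivAt)
    have h0 : fderiv ℝ (fun y => ∑ m, stackelMatrix φ y a m * N y m k) x = 0 := by
      rw [hid.fderiv_eq]; exact fderiv_const_apply _
    have hL := hder.fderiv.symm.trans h0
    have happ := congrArg (fun (L : (Fin n → ℝ) →L[ℝ] ℝ) => L (Pi.single i 1)) hL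
    simp only [ContinuousLinearMap.zero_apply, ContinuousLinearMap.sum_apply,
      ContinuousLinearMap.add_apply, ContinuousLinearMap.smul_apply,
      ContinuousLinearMap.proj_apply, smul_eq_mul, Pi.single_apply] at happ
    rw [Finset.sum_add_distrib] at happ
    by_cases ha : a = i
    · simp only [ha, eq_self_iff_true, if_true, if_pos rfl, mul_one] at happ ⊢
      have h2 : ∑ m, N x m k * deriv (φ i m) (x i)
          = ∑ m, deriv (φ i m) (x i) * N x m k :=
        Finset.sum_congr rfl fun m _ => mul_comm _ _
      rw [h2] at happ
      linarith
    · simp only [if_neg ha, mul_zero, Finset.sum_const_zero, add_zero, neg_zero]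
        at happ ⊢
      exact happ
  have hNM : ∀ a m, (∑ b, N x a b * stackelMatrix φ x b m)
      = if a = m then (1:ℝ) else 0 := by
    intro a m
    rw [← Matrix.mul_apply, hN, Matrix.nonsing_inv_mul _ hdetx, Matrix.one_apply]
  calc fderiv ℝ (fun y => N y r j) x (Pi.single i 1)
      = ∑ m, (if r = m then (1:ℝ) else 0)
          * fderiv ℝ (fun y => N y m j) x (Pi.single i 1) := by
        simp [ite_mul, Finset.sum_ite_eq]
    _ = ∑ m, (∑ b, N x r b * stackelMatrix φ x b m)
          * fderiv ℝ (fun y => N y m j) x (Pi.single i 1) := by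
        simp_rw [hNM]
    _ = ∑ b, N x r b * ∑ m, stackelMatrix φ x b m
          * fderiv ℝ (fun y => N y m j) x (Pi.single i 1) := by
        simp_rw [Finset.sum_mul, Finset.mul_sum, mul_assoc]
        rw [Finset.sum_comm]
    _ = ∑ b, N x r b *
          -(if b = i then (∑ m, deriv (φ i m) (x i) * N x m j) else 0) := by
        simp_rw [hsum]
    _ = -(N x r i * ∑ m, deriv (φ i m) (x i) * N x m j) := by
        simp [mul_ite, Finset.sum_ite_eq']

end Aux

/-- the geodesic Stäckel Hamiltonians
`E_r(λ,μ) = Σ_i (φ(λ)⁻¹)_{ri} μ_i²` pairwise commute with respect to the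
canonical Poisson bracket on `U × ℝⁿ`. -/
theorem stmt0 (n : ℕ) (U : Set (Fin n → ℝ)) (hU : IsOpen U)
    (φ : Fin n → Fin n → ℝ → ℝ) (hφ : ∀ i k, ContDiff ℝ (⊤ : ℕ∞) (φ i k))
    (hinv : ∀ x ∈ U, IsUnit (stackelMatrix φ x))
    (E : Fin n → (Fin n → ℝ) × (Fin n → ℝ) → ℝ)
    (hE : ∀ r z, E r z = ∑ i : Fin n, (stackelMatrix φ z.1)⁻¹ r i * z.2 i ^ 2) :
    ∀ r s : Fin n, ∀ x ∈ U, ∀ μ : Fin n → ℝ,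
      poissonBracket (E r) (E s) (x, μ) = 0 := by
  classical
  intro r s x hx μ
  have main : ∀ t i,
      fderiv ℝ (E t) (x, μ) (Pi.single i 1, 0)
        = (stackelMatrix φ x)⁻¹ t i
          * (-∑ j, (∑ m, deriv (φ i m) (x i) * (stackelMatrix φ x)⁻¹ m j)
              * (μ j * μ j))
      ∧ fderiv ℝ (E t) (x, μ) (0, Pi.single i 1)
        = (stackelMatrix φ x)⁻¹ t i * (2 * μ i) := by
    intro t i
    set K : Fin n → ((Fin n → ℝ) × (Fin n → ℝ)) →L[ℝ] ℝ := fun j =>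
      (ContinuousLinearMap.proj (R := ℝ) (φ := fun _ : Fin n => ℝ) j).comp
        (ContinuousLinearMap.snd ℝ (Fin n → ℝ) (Fin n → ℝ)) with hK
    set L : Fin n → ((Fin n → ℝ) × (Fin n → ℝ)) →L[ℝ] ℝ := fun j =>
      (fderiv ℝ (fun y => (stackelMatrix φ y)⁻¹ t j) x).comp
        (ContinuousLinearMap.fst ℝ (Fin n → ℝ) (Fin n → ℝ)) with hL
    have h1 : ∀ j, HasFDerivAt
        (fun z : (Fin n → ℝ) × (Fin n → ℝ) => (stackelMatrix φ z.1)⁻¹ t j)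
        (L j) (x, μ) := fun j => by
      have := (((diffAt_inv_entry φ hφ x (hinv x hx) t j).hasFDerivAt :
          HasFDerivAt _ _ (x, μ).1)).comp (x, μ)
        (hasFDerivAt_fst (𝕜 := ℝ) (p := (x, μ)))
      exact this
    have h2 : ∀ j, HasFDerivAt
        (fun z : (Fin n → ℝ) × (Fin n → ℝ) => z.2 j) (K j) (x, μ) :=
      fun j => (K j).hasFDerivAt
    have hEfun : E t
        = fun z : (Fin n → ℝ) × (Fin n → ℝ) =>
            ∑ j, (stackelMatrix φ z.1)⁻¹ t j * (z.2 j * z.2 j) :=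
      funext fun z => (hE t z).trans (Finset.sum_congr rfl fun j _ => by ring)
    have hD : HasFDerivAt (E t)
        (∑ j, (((stackelMatrix φ x)⁻¹ t j) • (μ j • K j + μ j • K j)
          + (μ j * μ j) • L j)) (x, μ) := by
      rw [hEfun]
      exact HasFDerivAt.fun_sum fun j _ => (h1 j).mul ((h2 j).mul (h2 j))
    have hfd := hD.fderiv
    have hLval : ∀ j, L j (Pi.single i 1, (0 : Fin n → ℝ))
        = -((stackelMatrix φ x)⁻¹ t i
            * ∑ m, deriv (φ i m) (x i) * (stackelMatrix φ x)⁻¹ m j) := by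
      intro j
      show (fderiv ℝ (fun y => (stackelMatrix φ y)⁻¹ t j) x) (Pi.single i 1) = _
      exact fderiv_inv_entry φ hφ U hU hinv x hx i t j
    have hK1 : ∀ j, K j (Pi.single i 1, (0 : Fin n → ℝ)) = 0 := fun j => rfl
    have hK2 : ∀ j, K j ((0 : Fin n → ℝ), Pi.single i 1)
        = if j = i then (1:ℝ) else 0 := fun j => Pi.single_apply i 1 j
    have hL2 : ∀ j, L j ((0 : Fin n → ℝ), Pi.single i 1) = 0 := fun j => by
      show (fderiv ℝ (fun y => (stackelMatrix φ y)⁻¹ t j) x) 0 = 0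
      exact map_zero _
    constructor
    · rw [hfd]
      simp only [ContinuousLinearMap.sum_apply, ContinuousLinearMap.add_apply,
        ContinuousLinearMap.smul_apply, hK1, hLval, smul_eq_mul, mul_zero,
        add_zero, zero_add]
      rw [mul_neg, Finset.mul_sum, ← Finset.sum_neg_distrib]
      exact Finset.sum_congr rfl fun j _ => by ring
    · rw [hfd]
      simp only [ContinuousLinearMap.sum_apply, ContinuousLinearMap.add_apply,
        ContinuousLinearMap.smul_apply, hK2, hL2, smul_eq_mul, mul_zero,
        add_zero]
      have hterm : ∀ j, (stackelMatrix φ x)⁻¹ t j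
            * (μ j * (if j = i then (1:ℝ) else 0)
              + μ j * (if j = i then (1:ℝ) else 0))
          = if j = i then (stackelMatrix φ x)⁻¹ t j * (2 * μ j) else 0 :=
        fun j => by
          by_cases h : j = i
          · simp only [if_pos h]; ring
          · simp [if_neg h]
      simp_rw [hterm]
      rw [Finset.sum_ite_eq' Finset.univ i]
      simp
  unfold poissonBracket
  refine Finset.sum_eq_zero fun i _ => ?_
  rw [(main r i).1, (main r i).2, (main s i).1, (main s i).2]
  ring
end

section
/- Fix k ∈ {2,…,n}. Let U ⊆ ℝⁿ be open and let v_k^i, g^{ii}, V_1, V_k (i = 1,…,n) be smooth real functions on U with g^{ii}(λ) ≠ 0 everywhere and v_k^i(λ) ≠ v_k^j(λ) for all i ≠ j. Assume: (i) ∂v_k^i/∂λ_i = 0 for every i; (ii) ∂_j ln g^{ii} = (∂_j v_k^i)/(v_k^j − v_k^i) for every pair i ≠ j (where ∂_j = ∂/∂λ_j); (iii) ∂_i V_k = v_k^i ∂_i V_1 for every i. Define H_1(λ,μ) = Σ_{i=1}^n g^{ii}(λ) μ_i² + V_1(λ) and H_k(λ,μ) = Σ_{i=1}^n v_k^i(λ)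 g^{ii}(λ) μ_i² + V_k(λ). Then the canonical Poisson bracket {H_1, H_k} vanishes identically on U × ℝⁿ. -/
open Finset

lemma hamDeriv {n : ℕ} (c : Fin n → (Fin n → ℝ) → ℝ) (W : (Fin n → ℝ) → ℝ)
    (x μ : Fin n → ℝ)
    (hc : ∀ i, DifferentiableAt ℝ (c i) x) (hW : DifferentiableAt ℝ W x)
    (a b : Fin n → ℝ) :
    fderiv ℝ (fun z : (Fin n → ℝ) × (Fin n → ℝ) =>
        (∑ i : Fin n, c i z.1 * z.2 i ^ 2) + W z.1) (x, μ) (a, b)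
      = (∑ i : Fin n, (fderiv ℝ (c i) x a * μ i ^ 2
          + c i x * (2 * μ i * b i))) + fderiv ℝ W x a := by
  set P : Fin n → (Fin n → ℝ) × (Fin n → ℝ) →L[ℝ] ℝ := fun i =>
    (ContinuousLinearMap.proj i).comp (ContinuousLinearMap.snd ℝ (Fin n → ℝ) (Fin n → ℝ)) with hP
  have h2 : ∀ i : Fin n, HasFDerivAt (fun z : (Fin n → ℝ) × (Fin n → ℝ) => z.2 i) (P i) (x, μ) :=
    fun i => (P i).hasFDerivAt
  have hterm : ∀ i ∈ Finset.univ, HasFDerivAt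
      (fun z : (Fin n → ℝ) × (Fin n → ℝ) => c i z.1 * z.2 i ^ 2)
      ((fun i => c i x • ((μ i) • P i + (μ i) • P i)
        + (μ i * μ i) • ((fderiv ℝ (c i) x).comp
            (ContinuousLinearMap.fst ℝ (Fin n → ℝ) (Fin n → ℝ)))) i) (x, μ) := by
    intro i _
    have h1 : HasFDerivAt (fun z : (Fin n → ℝ) × (Fin n → ℝ) => c i z.1)
        ((fderiv ℝ (c i) x).comp (ContinuousLinearMap.fst ℝ (Fin n → ℝ) (Fin n → ℝ))) (x, μ) :=
      ((hc i).hasFDerivAt).comp (x, μ) hasFDerivAt_fst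
    have heq : (fun z : (Fin n → ℝ) × (Fin n → ℝ) => c i z.1 * z.2 i ^ 2)
        = fun z => c i z.1 * (z.2 i * z.2 i) := by ext z; ring
    rw [heq]
    exact h1.mul ((h2 i).mul (h2 i))
  have hWd : HasFDerivAt (fun z : (Fin n → ℝ) × (Fin n → ℝ) => W z.1)
      ((fderiv ℝ W x).comp (ContinuousLinearMap.fst ℝ (Fin n → ℝ) (Fin n → ℝ))) (x, μ) :=
    (hW.hasFDerivAt).comp (x, μ) hasFDerivAt_fst
  have htot := (HasFDerivAt.fun_sum hterm).add hWd
  rw [show (fun z : (Fin n → ℝ) × (Fin n → ℝ) => (∑ i : Fin n, c i z.1 * z.2 i ^ 2) + W z.1)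
      = ((fun y => ∑ i, c i y.1 * y.2 i ^ 2) + fun z => W z.1) from rfl, htot.fderiv]
  simp only [ContinuousLinearMap.add_apply, ContinuousLinearMap.sum_apply,
    ContinuousLinearMap.smul_apply, ContinuousLinearMap.comp_apply,
    ContinuousLinearMap.proj_apply, ContinuousLinearMap.coe_fst',
    ContinuousLinearMap.coe_snd', smul_eq_mul, hP]
  congr 1
  apply Finset.sum_congr rfl
  intro i _
  ring

theorem stmt1' (n : ℕ)
    (U : Set (Fin n → ℝ)) (hU : IsOpen U)
    (v g : Fin n → (Fin n → ℝ) → ℝ) (V₁ Vₖ : (Fin n → ℝ) → ℝ)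
    (hv : ∀ i, ContDiffOn ℝ (⊤ : ℕ∞) (v i) U) (hg : ∀ i, ContDiffOn ℝ (⊤ : ℕ∞) (g i) U)
    (hV₁ : ContDiffOn ℝ (⊤ : ℕ∞) V₁ U) (hVₖ : ContDiffOn ℝ (⊤ : ℕ∞) Vₖ U)
    (hg0 : ∀ i, ∀ x ∈ U, g i x ≠ 0)
    (hvdist : ∀ i j, i ≠ j → ∀ x ∈ U, v i x ≠ v j x)
    (hyp1 : ∀ i, ∀ x ∈ U, fderiv ℝ (v i) x (Pi.single i 1) = 0)
    (hyp2 : ∀ i j, i ≠ j → ∀ x ∈ U,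
      fderiv ℝ (fun y => Real.log (g i y)) x (Pi.single j 1)
        = fderiv ℝ (v i) x (Pi.single j 1) / (v j x - v i x))
    (hyp3 : ∀ i, ∀ x ∈ U,
      fderiv ℝ Vₖ x (Pi.single i 1) = v i x * fderiv ℝ V₁ x (Pi.single i 1)) :
    ∀ x ∈ U, ∀ μ : Fin n → ℝ,
      ∑ i : Fin n,
        (fderiv ℝ (fun z : (Fin n → ℝ) × (Fin n → ℝ) =>
            (∑ i : Fin n, g i z.1 * z.2 i ^ 2) + V₁ z.1) (x, μ) (Pi.single i 1, 0)
          * fderiv ℝ (fun z : (Fin n → ℝ) × (Fin n → ℝ) =>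
            (∑ i : Fin n, v i z.1 * g i z.1 * z.2 i ^ 2) + Vₖ z.1) (x, μ) (0, Pi.single i 1)
        - fderiv ℝ (fun z : (Fin n → ℝ) × (Fin n → ℝ) =>
            (∑ i : Fin n, g i z.1 * z.2 i ^ 2) + V₁ z.1) (x, μ) (0, Pi.single i 1)
          * fderiv ℝ (fun z : (Fin n → ℝ) × (Fin n → ℝ) =>
            (∑ i : Fin n, v i z.1 * g i z.1 * z.2 i ^ 2) + Vₖ z.1) (x, μ) (Pi.single i 1, 0)) = 0 := by
  intro x hx μ
  have dg : ∀ i, DifferentiableAt ℝ (g i) x :=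
    fun i => ((hg i).contDiffAt (hU.mem_nhds hx)).differentiableAt (by simp)
  have dv : ∀ i, DifferentiableAt ℝ (v i) x :=
    fun i => ((hv i).contDiffAt (hU.mem_nhds hx)).differentiableAt (by simp)
  have dV₁ : DifferentiableAt ℝ V₁ x :=
    (hV₁.contDiffAt (hU.mem_nhds hx)).differentiableAt (by simp)
  have dVₖ : DifferentiableAt ℝ Vₖ x :=
    (hVₖ.contDiffAt (hU.mem_nhds hx)).differentiableAt (by simp)
  -- derivative of log ∘ g i
  have hlog : ∀ i, fderiv ℝ (fun y => Real.log (g i y)) x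
      = (g i x)⁻¹ • fderiv ℝ (g i) x := by
    intro i
    exact ((Real.hasDerivAt_log (hg0 i x hx)).comp_hasFDerivAt x (dg i).hasFDerivAt).fderiv
  -- key kinetic identity
  have hkey : ∀ i j : Fin n, v j x * fderiv ℝ (g i) x (Pi.single j 1)
      = fderiv ℝ (v i) x (Pi.single j 1) * g i x
        + v i x * fderiv ℝ (g i) x (Pi.single j 1) := by
    intro i j
    by_cases h : i = j
    · subst h
      rw [hyp1 i x hx]; ring
    · have h2 := hyp2 i j h x hx
      rw [hlog i] at h2
      simp only [ContinuousLinearMap.smul_apply, smul_eq_mul] at h2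
      have hne : v j x - v i x ≠ 0 :=
        sub_ne_zero.mpr (hvdist j i (Ne.symm h) x hx)
      field_simp [hg0 i x hx] at h2
      linear_combination h2
  -- derivative formulas
  have hF : ∀ (a b : Fin n → ℝ),
      fderiv ℝ (fun z : (Fin n → ℝ) × (Fin n → ℝ) =>
        (∑ i : Fin n, g i z.1 * z.2 i ^ 2) + V₁ z.1) (x, μ) (a, b)
      = (∑ i : Fin n, (fderiv ℝ (g i) x a * μ i ^ 2
          + g i x * (2 * μ i * b i))) + fderiv ℝ V₁ x a :=
    fun a b => hamDeriv g V₁ x μ dg dV₁ a b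
  have hG : ∀ (a b : Fin n → ℝ),
      fderiv ℝ (fun z : (Fin n → ℝ) × (Fin n → ℝ) =>
        (∑ i : Fin n, v i z.1 * g i z.1 * z.2 i ^ 2) + Vₖ z.1) (x, μ) (a, b)
      = (∑ i : Fin n, (fderiv ℝ (fun y => v i y * g i y) x a * μ i ^ 2
          + v i x * g i x * (2 * μ i * b i))) + fderiv ℝ Vₖ x a :=
    fun a b => hamDeriv (fun i y => v i y * g i y) Vₖ x μ
      (fun i => (dv i).mul (dg i)) dVₖ a b
  apply Finset.sum_eq_zero
  intro j _
  rw [hF (Pi.single j 1) 0, hF 0 (Pi.single j 1), hG (Pi.single j 1) 0, hG 0 (Pi.single j 1)]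
  simp only [Pi.zero_apply, mul_zero, add_zero, map_zero, zero_mul, zero_add]
  have hcol : ∀ (c : Fin n → ℝ),
      (∑ i : Fin n, c i * (2 * μ i * (Pi.single j 1 : Fin n → ℝ) i)) = c j * (2 * μ j) := by
    intro c
    rw [Finset.sum_eq_single j]
    · simp [Pi.single_eq_same]
    · intro i _ hij
      simp [Pi.single_eq_of_ne hij]
    · intro h; exact absurd (Finset.mem_univ j) h
  have hc1 : (∑ i : Fin n, g i x * (2 * μ i * (Pi.single j 1 : Fin n → ℝ) i)) = g j x * (2 * μ j) :=
    hcol (fun i => g i x)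
  have hc2 : (∑ i : Fin n, v i x * g i x * (2 * μ i * (Pi.single j 1 : Fin n → ℝ) i))
      = v j x * g j x * (2 * μ j) := hcol (fun i => v i x * g i x)
  rw [hc1, hc2]
  -- expand product-rule derivatives
  have hprod : ∀ i : Fin n, fderiv ℝ (fun y => v i y * g i y) x (Pi.single j 1)
      = fderiv ℝ (v i) x (Pi.single j 1) * g i x
        + v i x * fderiv ℝ (g i) x (Pi.single j 1) := by
    intro i
    rw [fderiv_fun_mul (dv i) (dg i)]
    simp [smul_eq_mul]
    ring
  have hS : v j x * (∑ i : Fin n, fderiv ℝ (g i) x (Pi.single j 1) * μ i ^ 2)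
      - (∑ i : Fin n, fderiv ℝ (fun y => v i y * g i y) x (Pi.single j 1) * μ i ^ 2) = 0 := by
    rw [Finset.mul_sum, ← Finset.sum_sub_distrib]
    apply Finset.sum_eq_zero
    intro i _
    rw [hprod i]
    linear_combination (μ i ^ 2) * hkey i j
  have hV : v j x * fderiv ℝ V₁ x (Pi.single j 1) - fderiv ℝ Vₖ x (Pi.single j 1) = 0 := by
    rw [hyp3 j x hx]; ring
  linear_combination (2 * μ j * g j x) * hS + (2 * μ j * g j x) * hV

/-- (for a fixed label `k ∈ {2,…,n}`) if the data
`v^i = v_k^i`, `g^{ii}`, `V_1`, `V_k` satisfy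
(i) `∂_i v^i = 0`, (ii) `∂_j ln g^{ii} = ∂_j v^i/(v^j − v^i)` for `i ≠ j`, and
(iii) `∂_i V_k = v^i ∂_i V_1`, then the Hamiltonians
`H_1 = Σ g^{ii} μ_i² + V_1` and `H_k = Σ v^i g^{ii} μ_i² + V_k`
Poisson-commute on `U × ℝⁿ`. -/
theorem stmt1 (n k : ℕ) (hk2 : 2 ≤ k) (hkn : k ≤ n)
    (U : Set (Fin n → ℝ)) (hU : IsOpen U)
    (v g : Fin n → (Fin n → ℝ) → ℝ) (V₁ Vₖ : (Fin n → ℝ) → ℝ)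
    (hv : ∀ i, ContDiffOn ℝ (⊤ : ℕ∞) (v i) U) (hg : ∀ i, ContDiffOn ℝ (⊤ : ℕ∞) (g i) U)
    (hV₁ : ContDiffOn ℝ (⊤ : ℕ∞) V₁ U) (hVₖ : ContDiffOn ℝ (⊤ : ℕ∞) Vₖ U)
    (hg0 : ∀ i, ∀ x ∈ U, g i x ≠ 0)
    (hvdist : ∀ i j, i ≠ j → ∀ x ∈ U, v i x ≠ v j x)
    (hyp1 : ∀ i, ∀ x ∈ U, fderiv ℝ (v i) x (Pi.single i 1) = 0)
    (hyp2 : ∀ i j, i ≠ j → ∀ x ∈ U,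
      fderiv ℝ (fun y => Real.log (g i y)) x (Pi.single j 1)
        = fderiv ℝ (v i) x (Pi.single j 1) / (v j x - v i x))
    (hyp3 : ∀ i, ∀ x ∈ U,
      fderiv ℝ Vₖ x (Pi.single i 1) = v i x * fderiv ℝ V₁ x (Pi.single i 1)) :
    ∀ x ∈ U, ∀ μ : Fin n → ℝ,
      poissonBracket
        (fun z => (∑ i : Fin n, g i z.1 * z.2 i ^ 2) + V₁ z.1)
        (fun z => (∑ i : Fin n, v i z.1 * g i z.1 * z.2 i ^ 2) + Vₖ z.1)
        (x, μ) = 0 := by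
  intro x hx μ
  unfold poissonBracket
  exact stmt1' n U hU v g V₁ Vₖ hv hg hV₁ hVₖ hg0 hvdist hyp1 hyp2 hyp3 x hx μ
end

section
/- Let U ⊆ ℝⁿ be open and let v^1,…,v^n and g^{11},…,g^{nn} be smooth real functions on U with g^{ii} > 0 everywhere and v^i(λ) ≠ v^j(λ) for all i ≠ j. Assume ∂_j ln g^{ii} = (∂_j v^i)/(v^j − v^i) for all i ≠ j, where ∂_j = ∂/∂λ_j. Then for all pairwise distinct indices i, j, l one has the semi-Hamiltonian property ∂_l [ (∂_j v^i)/(v^j − v^i) ] = ∂_j [ (∂_l v^i)/(v^l − v^i) ] on U. -/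
open Finset

/-- if `g^{ii} > 0`, the `v^i` are pairwise distinct and
`∂_j ln g^{ii} = ∂_j v^i/(v^j − v^i)` for all `i ≠ j`, then the `v^i` satisfy
the semi-Hamiltonian property
`∂_l [∂_j v^i/(v^j − v^i)] = ∂_j [∂_l v^i/(v^l − v^i)]` for pairwise distinct
`i, j, l`. -/
theorem stmt2 (n : ℕ) (U : Set (Fin n → ℝ)) (hU : IsOpen U)
    (v g : Fin n → (Fin n → ℝ) → ℝ)
    (hv : ∀ i, ContDiffOn ℝ (⊤ : ℕ∞) (v i) U) (hg : ∀ i, ContDiffOn ℝ (⊤ : ℕ∞) (g i) U)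
    (hgpos : ∀ i, ∀ x ∈ U, 0 < g i x)
    (hvdist : ∀ i j, i ≠ j → ∀ x ∈ U, v i x ≠ v j x)
    (hyp : ∀ i j, i ≠ j → ∀ x ∈ U,
      fderiv ℝ (fun y => Real.log (g i y)) x (Pi.single j 1)
        = fderiv ℝ (v i) x (Pi.single j 1) / (v j x - v i x)) :
    ∀ i j l : Fin n, i ≠ j → j ≠ l → i ≠ l → ∀ x ∈ U,
      fderiv ℝ (fun y => fderiv ℝ (v i) y (Pi.single j 1) / (v j y - v i y)) x
          (Pi.single l 1)
        = fderiv ℝ (fun y => fderiv ℝ (v i) y (Pi.single l 1) / (v l y - v i y)) x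
          (Pi.single j 1) := by
  intro i j l hij hjl hil x hx
  set f : (Fin n → ℝ) → ℝ := fun y => Real.log (g i y) with hf_def
  have hxU : U ∈ nhds x := hU.mem_nhds hx
  have hfC : ∀ y ∈ U, ContDiffAt ℝ (⊤ : ℕ∞) f y := fun y hy =>
    (Real.contDiffAt_log.2 (hgpos i y hy).ne').comp y ((hg i).contDiffAt (hU.mem_nhds hy))
  -- the two functions agree with derivatives of f near x
  have key : ∀ w : Fin n, i ≠ w →
      (fun y => fderiv ℝ (v i) y (Pi.single w 1) / (v w y - v i y))
        =ᶠ[nhds x] (fun y => fderiv ℝ f y (Pi.single w 1)) := by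
    intro w hiw
    filter_upwards [hxU] with y hy
    exact (hyp i w hiw y hy).symm
  have hdiff2 : DifferentiableAt ℝ (fderiv ℝ f) x := by
    have := (hfC x hx).fderiv_right (m := (⊤ : ℕ∞)) (by simp)
    exact this.differentiableAt (by simp)
  have happ : ∀ w : Fin n,
      fderiv ℝ (fun y => fderiv ℝ f y (Pi.single w 1)) x
        = ((ContinuousLinearMap.apply ℝ ℝ (Pi.single w (1:ℝ))).comp
            (fderiv ℝ (fderiv ℝ f) x)) := by
    intro w
    exact (((ContinuousLinearMap.apply ℝ ℝ (Pi.single w (1:ℝ))).hasFDerivAt).comp x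
      hdiff2.hasFDerivAt).fderiv
  have symm : fderiv ℝ (fderiv ℝ f) x (Pi.single l 1) (Pi.single j 1)
      = fderiv ℝ (fderiv ℝ f) x (Pi.single j 1) (Pi.single l 1) := by
    apply second_derivative_symmetric_of_eventually (f := f) (f' := fderiv ℝ f)
    · filter_upwards [hxU] with y hy
      exact ((hfC y hy).differentiableAt (by simp)).hasFDerivAt
    · exact hdiff2.hasFDerivAt
  calc fderiv ℝ (fun y => fderiv ℝ (v i) y (Pi.single j 1) / (v j y - v i y)) x
          (Pi.single l 1)
      = fderiv ℝ (fun y => fderiv ℝ f y (Pi.single j 1)) x (Pi.single l 1) := by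
        rw [(key j hij).fderiv_eq]
    _ = fderiv ℝ (fderiv ℝ f) x (Pi.single l 1) (Pi.single j 1) := by
        rw [happ j]; rfl
    _ = fderiv ℝ (fderiv ℝ f) x (Pi.single j 1) (Pi.single l 1) := symm
    _ = fderiv ℝ (fun y => fderiv ℝ f y (Pi.single l 1)) x (Pi.single j 1) := by
        rw [happ l]; rfl
    _ = _ := by rw [(key l hil).fderiv_eq]
end

section
/- Let λ_1,…,λ_n be pairwise distinct reals. With ρ_r and Δ_i as below, for every r = 1,…,n one has the interpolation identity Σ_{i=1}^n (∂ρ_r/∂λ_i) · λ_i^n / Δ_i = ρ_r. (This identity expresses that the first generic separable potential V_r^{(1)}, obtained from the Stäckel inversion of the monomial γ(λ) = λ^n, equals the Viète polynomial ρ_r up to sign.) -/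
open Finset

/-- The Viète polynomial `ρ_r(λ)`. -/
noncomputable def viete (n : ℕ) (r : ℕ) (x : Fin n → ℝ) : ℝ :=
  (-1 : ℝ) ^ r * ∑ s ∈ Finset.powersetCard r (Finset.univ : Finset (Fin n)),
    ∏ j ∈ s, x j

/-- `Δ_i(λ) = ∏_{j≠i} (λ_i − λ_j)`. -/
noncomputable def Delta (n : ℕ) (lam : Fin n → ℝ) (i : Fin n) : ℝ :=
  ∏ j ∈ Finset.univ.erase i, (lam i - lam j)

/-!
Since `ρ_r` is affine in each variable, `∂ρ_r/∂λ_i = (-1)^r e_{r-1}(λ_j : j ≠ i)`. The polynomial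
`X^n - ∏_j (X - λ_j)` has degree `< n` and takes the value `λ_i^n` at `λ_i`, so it equals its
Lagrange interpolant `∑_i λ_i^n ∏_{j ≠ i} (X - λ_j) / Δ_i`. Comparing the coefficients of
`X^(n-r)` on both sides by Vieta's formulas gives the identity.
-/

theorem Finset.sum_powersetCard_succ_filter_mem {α M : Type*} [DecidableEq α] [AddCommMonoid M]
    {u : Finset α} {i : α} (hi : i ∈ u) (r : ℕ) (f : Finset α → M) :
    ∑ s ∈ u.powersetCard (r + 1) with i ∈ s, f (s.erase i) =
      ∑ t ∈ (u.erase i).powersetCard r, f t :=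
  sum_nbij' (·.erase i) (insert i) (by grind) (by grind) (by grind) (by grind) fun _ _ => rfl

theorem fderiv_finsetProd_apply_single {𝕜 ι : Type*} [NontriviallyNormedField 𝕜] [Fintype ι]
    [DecidableEq ι] (s : Finset ι) (x : ι → 𝕜) (i : ι) :
    fderiv 𝕜 (fun y : ι → 𝕜 => ∏ j ∈ s, y j) x (Pi.single i 1) =
      if i ∈ s then ∏ j ∈ s.erase i, x j else 0 := by
  rw [hasFDerivAt_finsetProd.fderiv]
  simp [Pi.single_apply]

theorem fderiv_viete_succ_apply_single (n r : ℕ) (x : Fin n → ℝ) (i : Fin n) :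
    fderiv ℝ (viete n (r + 1)) x (Pi.single i 1) =
      (-1) ^ (r + 1) * ∑ t ∈ (univ.erase i).powersetCard r, ∏ j ∈ t, x j := by
  have hprod : ∀ s : Finset (Fin n), DifferentiableAt ℝ (fun y : Fin n → ℝ => ∏ j ∈ s, y j) x :=
    fun s => hasFDerivAt_finsetProd.differentiableAt
  unfold viete
  rw [fderiv_const_mul (DifferentiableAt.fun_sum fun s _ => hprod s),
    fderiv_fun_sum fun s _ => hprod s]
  simp only [smul_apply, _root_.sum_apply, smul_eq_mul,
    fderiv_finsetProd_apply_single, ← sum_filter]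
  rw [sum_powersetCard_succ_filter_mem (mem_univ i) r fun t => ∏ j ∈ t, x j]

open Polynomial

namespace Lagrange

theorem coeff_nodal_card_sub {R ι : Type*} [CommRing R] (s : Finset ι) (v : ι → R) {k : ℕ}
    (hk : k ≤ #s) :
    (nodal s v).coeff (#s - k) = (-1) ^ k * ∑ t ∈ s.powersetCard k, ∏ i ∈ t, v i := by
  have h := s.prod_X_add_C_coeff (fun i => -v i) (Nat.sub_le #s k)
  simp only [Nat.sub_sub_self hk, map_neg, ← sub_eq_add_neg] at h
  rw [nodal, h, mul_sum]
  refine sum_congr rfl fun t ht => ?_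
  rw [prod_neg, (mem_powersetCard.mp ht).2]

variable {F ι : Type*} [Field F] [DecidableEq ι] {s : Finset ι} {v : ι → F}

theorem basis_eq_C_nodalWeight_mul_nodal_erase {i : ι} (hi : i ∈ s) :
    Lagrange.basis s v i = C (nodalWeight s v i) * nodal (s.erase i) v := by
  rw [basis_eq_prod_sub_inv_mul_nodal_div hi, nodal_erase_eq_nodal_div hi]

theorem X_pow_card_sub_nodal_eq_interpolate (hvs : Set.InjOn v s) :
    X ^ #s - nodal s v = interpolate s v (fun i => v i ^ #s) := by
  have hdeg : (X ^ #s - nodal s v).degree < (#s : WithBot ℕ) := by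
    simpa using degree_sub_lt_left (p := (X : F[X]) ^ #s) (q := nodal s v) (by simp)
      (pow_ne_zero _ X_ne_zero) (by rw [leadingCoeff_X_pow, nodal_monic.leadingCoeff])
  refine eq_interpolate_of_eval_eq _ hvs hdeg fun i hi => ?_
  simp [eval_nodal_at_node hi]

theorem sum_pow_card_mul_nodalWeight_mul_esymm_erase (hvs : Set.InjOn v s) {r : ℕ}
    (hr : r < #s) :
    ∑ i ∈ s, v i ^ #s * nodalWeight s v i * ∑ t ∈ (s.erase i).powersetCard r, ∏ j ∈ t, v j
      = ∑ t ∈ s.powersetCard (r + 1), ∏ j ∈ t, v j := by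
  have hbasis : ∀ i ∈ s, v i ^ #s * (Lagrange.basis s v i).coeff (#s - (r + 1)) =
      (-1) ^ r * (v i ^ #s * nodalWeight s v i *
        ∑ t ∈ (s.erase i).powersetCard r, ∏ j ∈ t, v j) := by
    intro i hi
    have hcard : #(s.erase i) = #s - 1 := card_erase_of_mem hi
    rw [basis_eq_C_nodalWeight_mul_nodal_erase hi, coeff_C_mul,
      show #s - (r + 1) = #(s.erase i) - r by omega, coeff_nodal_card_sub _ _ (by omega)]
    ring
  have h := congrArg (coeff · (#s - (r + 1))) (X_pow_card_sub_nodal_eq_interpolate hvs)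
  simp only [coeff_sub, coeff_X_pow, if_neg (by omega : #s - (r + 1) ≠ #s), zero_sub,
    coeff_nodal_card_sub s v hr, interpolate_apply, finsetSum_coeff, coeff_C_mul,
    sum_congr rfl hbasis, ← mul_sum] at h
  refine mul_left_cancel₀ (pow_ne_zero r (neg_ne_zero.mpr one_ne_zero)) ?_
  rw [← h, pow_succ]
  ring

end Lagrange

theorem inv_Delta_eq_nodalWeight (n : ℕ) (lam : Fin n → ℝ) (i : Fin n) :
    (Delta n lam i)⁻¹ = Lagrange.nodalWeight univ lam i := by
  rw [Delta, Lagrange.nodalWeight, prod_inv_distrib]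

/-- for pairwise distinct `λ_1,…,λ_n` and every `r = 1,…,n`,
`Σ_i (∂ρ_r/∂λ_i) λ_i^n / Δ_i = ρ_r`. -/
theorem stmt7 (n : ℕ) (lam : Fin n → ℝ) (hlam : Function.Injective lam) :
    ∀ r ∈ Finset.Icc 1 n,
      ∑ i : Fin n,
        fderiv ℝ (viete n r) lam (Pi.single i 1) * lam i ^ n / Delta n lam i
        = viete n r lam := by
  intro r hr
  obtain ⟨hr1, hrn⟩ := mem_Icc.mp hr
  obtain ⟨k, rfl⟩ : ∃ k, r = k + 1 := Nat.exists_eq_add_one.mpr hr1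
  have key := Lagrange.sum_pow_card_mul_nodalWeight_mul_esymm_erase hlam.injOn
    (s := univ) (r := k) (by simpa using hrn)
  rw [card_univ, Fintype.card_fin] at key
  rw [viete, ← key, mul_sum]
  refine sum_congr rfl fun i _ => ?_
  rw [fderiv_viete_succ_apply_single, div_eq_mul_inv, inv_Delta_eq_nodalWeight]
  ring
end

section
/- Let λ_1,…,λ_n be pairwise distinct nonzero reals. With ρ_r and Δ_i as below (so that ρ_n = (−1)^n λ_1⋯λ_n ≠ 0), for every r = 1,…,n one has Σ_{i=1}^n (∂ρ_r/∂λ_i) / (λ_i Δ_i) = ρ_{r−1} / ρ_n. (This identity expresses that the first negative generic separable potential, obtained from the Stäckel inversion of γ(λ) = λ^{−1}, equals ρ_{r−1}/ρ_n up to sign.) -/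
open Finset

/-!
With `P(t) = ∏ⱼ (t - λⱼ)` and `Pᵢ(t) = ∏_{j ≠ i} (t - λⱼ)`, `ρ_r` is the coefficient of `t^(n-r)`
in `P`; as `P = (t - λᵢ) Pᵢ` is affine in `λᵢ`, `∂ρ_r/∂λᵢ` is minus that coefficient of `Pᵢ`.
The partial fraction identity `∑ᵢ Pᵢ(t) / (λᵢ Δᵢ) = -(P(t) - P(0)) / (t P(0))` holds because both
sides have degree `< n` and take the value `1/λₖ` at `t = λₖ`. Comparing coefficients of
`t^(n-r)` gives the theorem, since `P(0) = ρₙ`.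
-/

open Polynomial Lagrange

section Nodal

variable {ι R : Type*} [CommRing R]

theorem coeff_nodal (s : Finset ι) (v : ι → R) {k : ℕ} (hk : k ≤ #s) :
    (nodal s v).coeff k = (-1) ^ (#s - k) * ∑ t ∈ s.powersetCard (#s - k), ∏ i ∈ t, v i := by
  have := Multiset.prod_X_sub_C_coeff (s.val.map v) (k := k) (by simpa using hk)
  rwa [Multiset.map_map, Multiset.card_map, Finset.esymm_map_val] at this

theorem eval_divX_mul (p : R[X]) (x : R) : (divX p).eval x * x = p.eval x - p.coeff 0 := by
  conv_rhs => rw [← divX_mul_X_add p]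
  simp

variable {F : Type*} [Field F] [DecidableEq ι] {s : Finset ι} {v : ι → F}

theorem sum_smul_nodal_erase_eq_smul_divX (hvs : Set.InjOn v s) (hv : ∀ i ∈ s, v i ≠ 0) :
    ∑ i ∈ s, (v i * (nodal (s.erase i) v).eval (v i))⁻¹ • nodal (s.erase i) v
      = -((nodal s v).coeff 0)⁻¹ • divX (nodal s v) := by
  have hweight : ∀ i ∈ s, (nodal (s.erase i) v).eval (v i) ≠ 0 := fun i hi =>
    eval_nodal_not_at_node fun j hj h => (mem_erase.mp hj).1 (hvs (mem_erase.mp hj).2 hi h.symm)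
  have hc : (nodal s v).coeff 0 ≠ 0 := by
    rw [coeff_zero_eq_eval_zero]
    exact eval_nodal_not_at_node fun i hi h => hv i hi h.symm
  refine eq_of_degrees_lt_of_eval_index_eq s hvs ?_ ?_ fun k hk => ?_
  · rw [← mem_degreeLT]
    refine Submodule.sum_mem _ fun i hi => Submodule.smul_mem _ _ ?_
    rw [mem_degreeLT, degree_nodal, card_erase_of_mem hi, Nat.cast_lt]
    exact Nat.sub_lt (card_pos.mpr ⟨i, hi⟩) one_pos
  · refine (degree_smul_le _ _).trans_lt ?_
    simpa using degree_divX_lt (nodal_ne_zero (s := s) (v := v))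
  · have hLHS : ∀ i ∈ s, i ≠ k → (nodal (s.erase i) v).eval (v k) = 0 := fun i _ hik =>
      eval_nodal_at_node (mem_erase.mpr ⟨hik.symm, hk⟩)
    have hRHS := eval_divX_mul (nodal s v) (v k)
    rw [eval_nodal_at_node hk] at hRHS
    rw [eval_finsetSum, sum_eq_single_of_mem k hk fun i hi hik => by simp [hLHS i hi hik]]
    simp only [eval_smul, smul_eq_mul]
    field_simp [hweight k hk, hv k hk, hc]
    linear_combination hRHS

end Nodal

theorem viete_eq_coeff_nodal {n r : ℕ} (hr : r ≤ n) (x : Fin n → ℝ) :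
    viete n r x = (nodal univ x).coeff (n - r) := by
  rw [coeff_nodal _ _ (by simp), card_univ, Fintype.card_fin, Nat.sub_sub_self hr, viete]

theorem differentiable_viete (n r : ℕ) : Differentiable ℝ (viete n r) := by
  unfold viete
  fun_prop

theorem fderiv_viete_single {n r : ℕ} (hr : r ≤ n) (x : Fin n → ℝ) (i : Fin n) :
    fderiv ℝ (viete n r) x (Pi.single i 1) = -(nodal (univ.erase i) x).coeff (n - r) := by
  set Q := nodal (univ.erase i) x
  have hline : (fun t : ℝ => viete n r (x + t • Pi.single i 1))
      = fun t => (X * Q).coeff (n - r) - (x i + t) * Q.coeff (n - r) := by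
    funext t
    have hQ : nodal (univ.erase i) (x + t • Pi.single i 1) = Q :=
      prod_congr rfl fun j hj => by simp [(mem_erase.mp hj).1]
    rw [viete_eq_coeff_nodal hr, nodal_eq_mul_nodal_erase (mem_univ i), hQ, sub_mul, coeff_sub,
      coeff_C_mul]
    simp
  rw [← (differentiable_viete n r x).lineDeriv_eq_fderiv, lineDeriv, hline]
  simp

theorem Delta_eq_eval_nodal (n : ℕ) (lam : Fin n → ℝ) (i : Fin n) :
    Delta n lam i = (nodal (univ.erase i) lam).eval (lam i) :=
  eval_nodal.symm

/-- for pairwise distinct nonzero `λ_1,…,λ_n` (so that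
`ρ_n = (−1)^n λ_1⋯λ_n ≠ 0`) and every `r = 1,…,n`,
`Σ_i (∂ρ_r/∂λ_i)/(λ_i Δ_i) = ρ_{r−1}/ρ_n`. -/
theorem stmt8 (n : ℕ) (lam : Fin n → ℝ) (hlam : Function.Injective lam)
    (hne : ∀ i, lam i ≠ 0) :
    ∀ r ∈ Finset.Icc 1 n,
      ∑ i : Fin n,
        fderiv ℝ (viete n r) lam (Pi.single i 1) / (lam i * Delta n lam i)
        = viete n (r - 1) lam / viete n n lam := by
  intro r hr
  obtain ⟨hr1, hrn⟩ := mem_Icc.mp hr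
  have key := congrArg (coeff · (n - r))
    (sum_smul_nodal_erase_eq_smul_divX hlam.injOn fun i (_ : i ∈ univ) => hne i)
  simp only [finsetSum_coeff, coeff_smul, coeff_divX, smul_eq_mul, neg_mul] at key
  rw [viete_eq_coeff_nodal (by omega : r - 1 ≤ n), viete_eq_coeff_nodal le_rfl, Nat.sub_self,
    show n - (r - 1) = n - r + 1 by omega]
  simp only [fderiv_viete_single hrn, Delta_eq_eval_nodal, div_eq_inv_mul, mul_neg,
    sum_neg_distrib, key, neg_neg]
end

section
/- Fix k, l ∈ {1,…,n}, let U ⊆ ℝⁿ be open, and let v_k^i, v_l^i, V_1, V_k, V_l (i = 1,…,n) be smooth functions on U satisfying the separability conditions ∂_i V_k = v_k^i ∂_i V_1 and ∂_i V_l = v_l^i ∂_i V_1 for all i (∂_i = ∂/∂λ_i). Let λ : W → U be a smooth map on an open set W ⊆ ℝ² with coordinates (t_k, t_l), whose components satisfy the hydrodynamic equations v_l^i(λ) · ∂λ_i/∂t_k = v_k^i(λ) · ∂λ_i/∂t_l for each i. Then the conservation law ∂/∂t_k [V_l(λ(t_k,t_l))] = ∂/∂t_l [V_k(λ(t_k,t_l))]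 holds on W. -/
open Finset

/-- conservation law for the hydrodynamic systems.  If
`∂_i V_k = v_k^i ∂_i V_1`, `∂_i V_l = v_l^i ∂_i V_1` on `U` and a smooth map
`λ : W → U`, `W ⊆ ℝ²` open with coordinates `(t_k, t_l)`, satisfies
`v_l^i(λ) ∂λ_i/∂t_k = v_k^i(λ) ∂λ_i/∂t_l`, then
`∂/∂t_k [V_l ∘ λ] = ∂/∂t_l [V_k ∘ λ]` on `W`. -/
theorem stmt10 (n : ℕ) (U : Set (Fin n → ℝ)) (hU : IsOpen U)
    (vk vl : Fin n → (Fin n → ℝ) → ℝ) (V₁ Vk Vl : (Fin n → ℝ) → ℝ)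
    (hvk : ∀ i, ContDiffOn ℝ (⊤ : ℕ∞) (vk i) U) (hvl : ∀ i, ContDiffOn ℝ (⊤ : ℕ∞) (vl i) U)
    (hV₁ : ContDiffOn ℝ (⊤ : ℕ∞) V₁ U) (hVk : ContDiffOn ℝ (⊤ : ℕ∞) Vk U)
    (hVl : ContDiffOn ℝ (⊤ : ℕ∞) Vl U)
    (hsepk : ∀ i, ∀ x ∈ U,
      fderiv ℝ Vk x (Pi.single i 1) = vk i x * fderiv ℝ V₁ x (Pi.single i 1))
    (hsepl : ∀ i, ∀ x ∈ U,
      fderiv ℝ Vl x (Pi.single i 1) = vl i x * fderiv ℝ V₁ x (Pi.single i 1))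
    (W : Set (ℝ × ℝ)) (hW : IsOpen W)
    (lam : ℝ × ℝ → (Fin n → ℝ)) (hlam : ContDiffOn ℝ (⊤ : ℕ∞) lam W)
    (hmaps : ∀ w ∈ W, lam w ∈ U)
    (hhydro : ∀ w ∈ W, ∀ i : Fin n,
      vl i (lam w) * fderiv ℝ (fun u => lam u i) w (1, 0)
        = vk i (lam w) * fderiv ℝ (fun u => lam u i) w (0, 1)) :
    ∀ w ∈ W,
      fderiv ℝ (fun u => Vl (lam u)) w (1, 0)
        = fderiv ℝ (fun u => Vk (lam u)) w (0, 1) := by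
  intro w hw
  have hxU := hmaps w hw
  have hUnhd : U ∈ nhds (lam w) := hU.mem_nhds hxU
  have hWnhd : W ∈ nhds w := hW.mem_nhds hw
  have hlamd : DifferentiableAt ℝ lam w :=
    (hlam.contDiffAt hWnhd).differentiableAt (by simp)
  have hVld : DifferentiableAt ℝ Vl (lam w) :=
    (hVl.contDiffAt hUnhd).differentiableAt (by simp)
  have hVkd : DifferentiableAt ℝ Vk (lam w) :=
    (hVk.contDiffAt hUnhd).differentiableAt (by simp)
  -- decomposition of a linear functional via coordinates
  have hdec : ∀ (L : (Fin n → ℝ) →L[ℝ] ℝ) (v : Fin n → ℝ),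
      L v = ∑ i, v i * L (Pi.single i 1) := by
    intro L v
    have hv : v = ∑ i, v i • (Pi.single i 1 : Fin n → ℝ) := by
      funext j
      simp [Pi.single_apply, Finset.sum_ite_eq']
    calc L v = L (∑ i, v i • (Pi.single i 1 : Fin n → ℝ)) := by rw [← hv]
      _ = ∑ i, v i * L (Pi.single i 1) := by
          rw [map_sum]
          simp [smul_eq_mul]
  -- component derivatives
  have hproj : ∀ (i : Fin n) (e : ℝ × ℝ),
      fderiv ℝ (fun u => lam u i) w e = fderiv ℝ lam w e i := by
    intro i e
    have : fderiv ℝ (fun u => lam u i) w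
        = (ContinuousLinearMap.proj i : ((Fin n → ℝ) →L[ℝ] ℝ)).comp (fderiv ℝ lam w) := by
      rw [← (ContinuousLinearMap.proj i : ((Fin n → ℝ) →L[ℝ] ℝ)).fderiv (x := lam w)]
      exact fderiv_comp w (ContinuousLinearMap.proj i).differentiableAt hlamd
    rw [this]; rfl
  have hchain : ∀ (V : (Fin n → ℝ) → ℝ), DifferentiableAt ℝ V (lam w) →
      ∀ e : ℝ × ℝ, fderiv ℝ (fun u => V (lam u)) w e
        = ∑ i, fderiv ℝ lam w e i * fderiv ℝ V (lam w) (Pi.single i 1) := by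
    intro V hV e
    have : fderiv ℝ (fun u => V (lam u)) w = (fderiv ℝ V (lam w)).comp (fderiv ℝ lam w) :=
      fderiv_comp w hV hlamd
    rw [this, ContinuousLinearMap.comp_apply, hdec]
  rw [hchain Vl hVld (1,0), hchain Vk hVkd (0,1)]
  apply Finset.sum_congr rfl
  intro i _
  rw [hsepl i (lam w) hxU, hsepk i (lam w) hxU]
  have hh := hhydro w hw i
  rw [hproj i (1,0), hproj i (0,1)] at hh
  ring_nf
  ring_nf at hh
  rw [mul_comm (fderiv ℝ lam w (1,0) i) (vl i (lam w)), hh]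
  ring
end

section
/- Let α ∈ ℝ, β ∈ ℝⁿ a constant vector, γ a constant symmetric n×n real matrix, and set G(q) = α q qᵀ + β qᵀ + q βᵀ + γ for q ∈ ℝⁿ. Then the matrix field A(q) = adjugate(G(q)) is a Killing matrix: it is symmetric and its entries satisfy the Killing equations ∂_i A_{jk} + ∂_j A_{ki} + ∂_k A_{ij} = 0 for all i, j, k ∈ {1,…,n}, where ∂_i = ∂/∂q_i and q are Cartesian coordinates on ℝⁿ. -/
/-!
Write `A = adjugate G`. Where `det G ≠ 0`, differentiating `G * A = det G • 1` and using Jacobi's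
formula gives `det G • ∂A = tr (A ∂G) • A - A ∂G A`. Here `∂ᵢG = eᵢ vᵀ + v eᵢᵀ` with
`v = α q + β`, so with `u = A v` we get `det G • ∂ᵢA_{jk} = 2 uᵢ A_{jk} - A_{ji} u_k - u_j A_{ik}`,
whose cyclic sum vanishes because `A` is symmetric. For singular `G`, replace `G` by `G + t • 1`:
it is invertible for all but finitely many `t`, and the derivatives of `adjugate (G + t • 1)` are
cofactors of `G + t • 1` paired with `t`-independent terms, hence continuous in `t`, so the identity
passes to the limit `t → 0`.
-/

open Finset Matrix

/-- `G(q) = α q qᵀ + β qᵀ + q βᵀ + γ`. -/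
def Gmat {n : ℕ} (α : ℝ) (β : Fin n → ℝ) (γ : Matrix (Fin n) (Fin n) ℝ)
    (q : Fin n → ℝ) : Matrix (Fin n) (Fin n) ℝ :=
  Matrix.of fun i j => α * q i * q j + β i * q j + q i * β j + γ i j

namespace Matrix

variable {ι R : Type*} [Fintype ι] [DecidableEq ι] [CommRing R]

/-- `det M` times the derivative of `adjugate` at `M` in the direction `H`, expressed through
`A = adjugate M`; see `Matrix.det_smul_fderiv_adjugate`. -/
def adjugateDeriv (A H : Matrix ι ι R) : Matrix ι ι R :=
  trace (A * H) • A - A * H * A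

theorem adjugateDeriv_vecMulVec_add_vecMulVec_apply {A : Matrix ι ι R} (hA : A.IsSymm)
    (v : ι → R) (l a b : ι) :
    adjugateDeriv A (vecMulVec (Pi.single l 1) v + vecMulVec v (Pi.single l 1)) a b =
      2 * (A *ᵥ v) l * A a b - A a l * (A *ᵥ v) b - (A *ᵥ v) a * A l b := by
  have hvA : v ᵥ* A = A *ᵥ v := by rw [← mulVec_transpose, hA.eq]
  have hcol : A.col l ⬝ᵥ v = (A *ᵥ v) l := by rw [← hvA, dotProduct_comm]; rfl
  simp only [adjugateDeriv, Matrix.mul_add, Matrix.add_mul, mul_vecMulVec, vecMulVec_mul,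
    trace_add, trace_vecMulVec, mulVec_single_one, single_one_vecMul, hvA, hcol,
    dotProduct_single_one, sub_apply, add_apply, smul_apply, vecMulVec_apply, col_apply,
    row_apply, smul_eq_mul]
  ring

theorem adjugateDeriv_cyclic {A : Matrix ι ι R} (hA : A.IsSymm) (v : ι → R) (i j k : ι) :
    adjugateDeriv A (vecMulVec (Pi.single i 1) v + vecMulVec v (Pi.single i 1)) j k +
      adjugateDeriv A (vecMulVec (Pi.single j 1) v + vecMulVec v (Pi.single j 1)) k i +
      adjugateDeriv A (vecMulVec (Pi.single k 1) v + vecMulVec v (Pi.single k 1)) i j = 0 := by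
  simp only [adjugateDeriv_vecMulVec_add_vecMulVec_apply hA, hA.apply j k, hA.apply k i,
    hA.apply i j]
  ring

theorem finite_setOf_det_add_smul_one_eq_zero {K : Type*} [Field K] (M : Matrix ι ι K) :
    {t : K | (M + t • 1).det = 0}.Finite := by
  refine (Polynomial.finite_setOfPred_isRoot (charpoly_monic (-M)).ne_zero).subset fun t ht => ?_
  simpa [Polynomial.IsRoot, eval_charpoly, scalar_apply, ← smul_one_eq_diagonal, add_comm]
    using ht

open Equiv in
theorem adjugate_apply_eq_sum_perm (M : Matrix ι ι R) (a b : ι) :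
    adjugate M a b =
      ∑ σ : Perm ι, if σ a = b then (Perm.sign σ : R) * ∏ m ∈ univ.erase a, M (σ m) m else 0 := by
  rw [adjugate_apply, det_apply']
  refine sum_congr rfl fun σ _ => ?_
  split_ifs with h
  · rw [← mul_prod_erase _ _ (mem_univ a), updateRow_apply, if_pos h, Pi.single_eq_same,
      one_mul]
    congr 1
    refine prod_congr rfl fun m hm => ?_
    rw [updateRow_apply, if_neg fun hm' => (ne_of_mem_erase hm) (σ.injective (hm'.trans h.symm))]
  · refine mul_eq_zero_of_right _ (prod_eq_zero (mem_univ (σ.symm b)) ?_)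
    rw [updateRow_apply, if_pos (σ.apply_symm_apply b)]
    exact Pi.single_eq_of_ne (fun h' => h (by rw [← h', σ.apply_symm_apply])) 1

variable {𝕜 E : Type*} [NontriviallyNormedField 𝕜] [NormedAddCommGroup E] [NormedSpace 𝕜 E]
  {B : E → Matrix ι ι 𝕜} {L : ι → ι → E →L[𝕜] 𝕜} {q : E}

open Equiv in
theorem _root_.HasFDerivAt.matrix_det (hB : ∀ a b, HasFDerivAt (fun w => B w a b) (L a b) q) :
    HasFDerivAt (fun w => (B w).det) (∑ a, ∑ b, adjugate (B q) a b • L b a) q := by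
  simp_rw [det_apply']
  refine (HasFDerivAt.fun_sum fun σ _ =>
    (HasFDerivAt.finsetProd fun l _ => hB (σ l) l).const_mul ((Perm.sign σ : ℤ) : 𝕜)).congr_fderiv
    ?_
  ext h
  simp only [_root_.sum_apply, _root_.smul_apply, smul_eq_mul,
    adjugate_apply_eq_sum_perm, sum_mul, ite_mul, zero_mul, mul_sum]
  rw [sum_comm]
  refine sum_congr rfl fun a _ => ?_
  rw [sum_comm]
  simp [mul_assoc]

theorem _root_.HasFDerivAt.matrix_adjugate_apply
    (hB : ∀ a b, HasFDerivAt (fun w => B w a b) (L a b) q) (a b : ι) :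
    HasFDerivAt (fun w => adjugate (B w) a b)
      (∑ c, ∑ d, adjugate ((B q).updateRow b (Pi.single a 1)) c d •
        if d = b then 0 else L d c) q := by
  rw [show (fun w => adjugate (B w) a b) = fun w => ((B w).updateRow b (Pi.single a 1)).det
    from funext fun w => adjugate_apply _ _ _]
  refine HasFDerivAt.matrix_det fun c d => ?_
  by_cases hc : c = b
  · simp only [updateRow_apply, if_pos hc]
    exact hasFDerivAt_const _ _
  · simp only [updateRow_apply, if_neg hc]
    exact hB c d

theorem continuous_fderiv_adjugate_add_smul_one
    (hB : ∀ a b, DifferentiableAt 𝕜 (fun w => B w a b) q) (a b : ι) :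
    Continuous fun t : 𝕜 => fderiv 𝕜 (fun w => adjugate (B w + t • 1) a b) q := by
  have hBt (t : 𝕜) (c d : ι) :
      HasFDerivAt (fun w => (B w + t • 1) c d) (fderiv 𝕜 (fun w => B w c d) q) q :=
    (hB c d).hasFDerivAt.add_const _
  simp_rw [fun t => (HasFDerivAt.matrix_adjugate_apply (hBt t) a b).fderiv]
  fun_prop

theorem det_smul_fderiv_adjugate (hB : ∀ a b, HasFDerivAt (fun w => B w a b) (L a b) q)
    (h : E) :
    (B q).det • of (fun a b => fderiv 𝕜 (fun w => adjugate (B w) a b) q h) =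
      adjugateDeriv (adjugate (B q)) (of fun a b => L a b h) := by
  set A := adjugate (B q)
  set dB : Matrix ι ι 𝕜 := of fun a b => L a b h
  set dA : Matrix ι ι 𝕜 := of fun a b => fderiv 𝕜 (fun w => adjugate (B w) a b) q h
  have hA a b := (HasFDerivAt.matrix_adjugate_apply hB a b).differentiableAt.hasFDerivAt
  have hprod : B q * dA + dB * A = trace (A * dB) • 1 := by
    ext a b
    have hl : HasFDerivAt (fun w => (B w * adjugate (B w)) a b)
        (∑ c, (B q a c • fderiv 𝕜 (fun w => adjugate (B w) c b) q + A c b • L a c)) q :=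
      HasFDerivAt.fun_sum fun c _ => (hB a c).mul (hA c b)
    have hr : HasFDerivAt (fun w => (B w * adjugate (B w)) a b)
        ((1 : Matrix ι ι 𝕜) a b • ∑ c, ∑ d, A c d • L d c) q := by
      simp_rw [mul_adjugate, smul_apply, smul_eq_mul, mul_comm _ ((1 : Matrix ι ι 𝕜) a b)]
      exact (HasFDerivAt.matrix_det hB).const_mul _
    have := congrArg (· h) (hl.unique hr)
    simp only [_root_.sum_apply, _root_.smul_apply, _root_.add_apply, smul_eq_mul] at this
    simp only [add_apply, mul_apply, smul_apply, trace, diag, dA, dB, of_apply, smul_eq_mul,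
      ← sum_add_distrib]
    rw [mul_comm, ← this]
    exact sum_congr rfl fun c _ => by ring
  calc (B q).det • dA = A * (B q * dA) := by
        rw [← Matrix.mul_assoc, adjugate_mul, smul_mul, one_mul]
    _ = adjugateDeriv A dB := by
      rw [← add_sub_cancel_right (B q * dA) (dB * A), hprod]
      simp [adjugateDeriv, Matrix.mul_sub, Matrix.mul_assoc]

end Matrix

section Killing

variable {𝕜 ι : Type*} [NontriviallyNormedField 𝕜] [Fintype ι] [DecidableEq ι]

noncomputable def killingSum (A : (ι → 𝕜) → Matrix ι ι 𝕜) (q : ι → 𝕜) (i j k : ι) : 𝕜 :=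
  fderiv 𝕜 (fun w => A w j k) q (Pi.single i 1) + fderiv 𝕜 (fun w => A w k i) q (Pi.single j 1) +
    fderiv 𝕜 (fun w => A w i j) q (Pi.single k 1)

theorem killingSum_adjugate_eq_zero {B : (ι → 𝕜) → Matrix ι ι 𝕜}
    {L : ι → ι → (ι → 𝕜) →L[𝕜] 𝕜} {q v : ι → 𝕜}
    (hB : ∀ a b, HasFDerivAt (fun w => B w a b) (L a b) q)
    (hL : ∀ a b h, L a b h = h a * v b + v a * h b) (hsymm : (B q).IsSymm)
    (hdet : (B q).det ≠ 0) (i j k : ι) :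
    killingSum (fun w => adjugate (B w)) q i j k = 0 := by
  have hdA (l a b : ι) : (B q).det * fderiv 𝕜 (fun w => adjugate (B w) a b) q (Pi.single l 1) =
      adjugateDeriv (adjugate (B q))
        (vecMulVec (Pi.single l 1) v + vecMulVec v (Pi.single l 1)) a b := by
    have hdB : (of fun a b => L a b (Pi.single l 1)) =
        vecMulVec (Pi.single l 1) v + vecMulVec v (Pi.single l 1) := by
      ext a b
      simp [hL, vecMulVec_apply, mul_comm]
    rw [← hdB, ← det_smul_fderiv_adjugate hB]
    rfl
  refine (mul_eq_zero.mp ?_).resolve_left hdet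
  rw [killingSum, mul_add, mul_add, hdA, hdA, hdA]
  exact adjugateDeriv_cyclic hsymm.adjugate v i j k

theorem continuous_killingSum_adjugate_add_smul_one {B : (ι → 𝕜) → Matrix ι ι 𝕜} {q : ι → 𝕜}
    (hB : ∀ a b, DifferentiableAt 𝕜 (fun w => B w a b) q) (i j k : ι) :
    Continuous fun t : 𝕜 => killingSum (fun w => adjugate (B w + t • 1)) q i j k := by
  have h a b c := (continuous_fderiv_adjugate_add_smul_one hB a b).clm_apply
    (continuous_const (y := (Pi.single c 1 : ι → 𝕜)))
  exact ((h j k i).add (h k i j)).add (h i j k)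

end Killing

theorem Gmat_isSymm {n : ℕ} (α : ℝ) (β : Fin n → ℝ) {γ : Matrix (Fin n) (Fin n) ℝ}
    (hγ : γ.IsSymm) (q : Fin n → ℝ) : (Gmat α β γ q).IsSymm :=
  IsSymm.ext fun a b => by simp only [Gmat, of_apply, hγ.apply]; ring

theorem hasFDerivAt_Gmat_apply {n : ℕ} (α : ℝ) (β : Fin n → ℝ) (γ : Matrix (Fin n) (Fin n) ℝ)
    (q : Fin n → ℝ) (a b : Fin n) :
    HasFDerivAt (fun w => Gmat α β γ w a b)
      ((α * q b + β b) • ContinuousLinearMap.proj (R := ℝ) (φ := fun _ => ℝ) a +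
        (α * q a + β a) • ContinuousLinearMap.proj b) q := by
  have ha := hasFDerivAt_apply (𝕜 := ℝ) a q
  have hb := hasFDerivAt_apply (𝕜 := ℝ) b q
  refine ((((ha.const_mul α).mul hb).add (hb.const_mul (β a))).add
    (ha.mul_const (β b))).add_const (γ a b) |>.congr_fderiv ?_
  ext h
  simp only [_root_.add_apply, _root_.smul_apply, ContinuousLinearMap.proj_apply, smul_eq_mul]
  ring

/-- `A(q) = adjugate(G(q))` is a Killing matrix: it is symmetric
and `∂_i A_{jk} + ∂_j A_{ki} + ∂_k A_{ij} = 0` for all `i, j, k`. -/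
theorem stmt17 (n : ℕ) (α : ℝ) (β : Fin n → ℝ)
    (γ : Matrix (Fin n) (Fin n) ℝ) (hγ : γ.IsSymm) :
    (∀ q : Fin n → ℝ, (Matrix.adjugate (Gmat α β γ q)).IsSymm)
    ∧ ∀ (q : Fin n → ℝ) (i j k : Fin n),
        fderiv ℝ (fun w => Matrix.adjugate (Gmat α β γ w) j k) q (Pi.single i 1)
          + fderiv ℝ (fun w => Matrix.adjugate (Gmat α β γ w) k i) q
              (Pi.single j 1)
          + fderiv ℝ (fun w => Matrix.adjugate (Gmat α β γ w) i j) q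
              (Pi.single k 1) = 0 := by
  refine ⟨fun q => (Gmat_isSymm α β hγ q).adjugate, fun q i j k => ?_⟩
  have hGderiv a b := hasFDerivAt_Gmat_apply α β γ q a b
  have hzero : ∀ t ∈ {t : ℝ | (Gmat α β γ q + t • 1).det = 0}ᶜ,
      killingSum (fun w => adjugate (Gmat α β γ w + t • 1)) q i j k = 0 := fun t ht =>
    killingSum_adjugate_eq_zero (v := α • q + β) (fun a b => (hGderiv a b).add_const _)
      (fun a b h => by
        simp only [_root_.add_apply, _root_.smul_apply, ContinuousLinearMap.proj_apply,
          smul_eq_mul, Pi.add_apply, Pi.smul_apply]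
        ring) ((Gmat_isSymm α β hγ q).add (isSymm_one.smul t)) ht i j k
  have hS := Continuous.ext_on
    ((finite_setOf_det_add_smul_one_eq_zero _).countable.dense_compl ℝ)
    (continuous_killingSum_adjugate_add_smul_one (fun a b => (hGderiv a b).differentiableAt) i j k)
    continuous_const hzero
  simpa [killingSum] using congrFun hS 0
end

section
/- Let G(q) = α q qᵀ + β qᵀ + q βᵀ + γ and G̃(q) = α̃ q qᵀ + β̃ qᵀ + q β̃ᵀ + γ̃ with α, α̃ ∈ ℝ, β, β̃ ∈ ℝⁿ constant vectors, γ, γ̃ constant symmetric n×n real matrices, and define matrix fields A_1(q),…,A_n(q) by the polynomial expansion adjugate(G̃(q) + t G(q)) = Σ_{i=0}^{n−1} A_{n−i}(q) t^{i} (so that A_1 = adjugate(G) and A_n = adjugate(G̃)). Then every A_r is a Killing matrix: it is symmetric and ∂_i (A_r)_{jk} + ∂_j (A_r)_{ki} + ∂_k (A_r)_{ij} = 0 for all i, j, k ∈ {1,…,n}, where ∂_i = ∂/∂q_i. -/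
open Finset Matrix Polynomial

/-- The matrix `G̃(q) + t G(q)` regarded as a matrix over `ℝ[t]`. -/
noncomputable def pencilMat {n : ℕ} (α αt : ℝ) (β βt : Fin n → ℝ)
    (γ γt : Matrix (Fin n) (Fin n) ℝ) (q : Fin n → ℝ) :
    Matrix (Fin n) (Fin n) (Polynomial ℝ) :=
  (Gmat αt βt γt q).map Polynomial.C
    + (Gmat α β γ q).map (fun x => Polynomial.C x * Polynomial.X)

/-- The matrices `A_r(q)` defined by
`adjugate(G̃(q) + t G(q)) = Σ_{i=0}^{n−1} A_{n−i}(q) t^i`, i.e. `A_r` is the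
coefficient of `t^{n−r}` (so `A_1 = adjugate G`, `A_n = adjugate G̃`). -/
noncomputable def Amat {n : ℕ} (α αt : ℝ) (β βt : Fin n → ℝ)
    (γ γt : Matrix (Fin n) (Fin n) ℝ) (r : ℕ) (q : Fin n → ℝ) :
    Matrix (Fin n) (Fin n) ℝ :=
  Matrix.of fun i j =>
    ((Matrix.adjugate (pencilMat α αt β βt γ γt q)) i j).coeff (n - r)

/-!
Replace the coefficients of `G̃ + tG` by indeterminates: the generic matrix
`M = a q qᵀ + b qᵀ + q bᵀ + c` (with `c` symmetric) satisfies `∂ᵢ M = eᵢ vᵀ + v eᵢᵀ` with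
`v = a q + b`. Differentiating `adj M · M = det M · 1` and using Jacobi's formula, which here gives
`∂ᵢ det M = 2 wᵢ` with `w = adj M · v`, yields
`det M · ∂ᵢ (adj M)ⱼₖ = 2 wᵢ (adj M)ⱼₖ - (adj M)ⱼᵢ wₖ - wⱼ (adj M)ᵢₖ`,
whose cyclic sum in `i, j, k` vanishes because `adj M` is symmetric. Since `det M` is a nonzero
polynomial, the cyclic sum of the partial derivatives of `adj M` vanishes in the polynomial ring.
Specializing `a, b, c` to `α̃ + tα, β̃ + tβ, γ̃ + tγ` and extracting the coefficient of `t^(n-r)`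
commute with `∂ᵢ`, which gives the Killing equation for `A_r`.
-/

namespace Derivation

variable {S R : Type*} [CommRing S] [CommRing R] [Algebra S R] (D : Derivation S R R)

theorem leibniz_finset_prod {ι : Type*} [DecidableEq ι] (s : Finset ι) (f : ι → R) :
    D (∏ b ∈ s, f b) = ∑ b ∈ s, D (f b) * ∏ c ∈ s.erase b, f c := by
  induction s using Finset.induction_on with
  | empty => simp
  | @insert a s ha ih =>
    rw [prod_insert ha, D.leibniz, ih, sum_insert ha, erase_insert ha, smul_eq_mul, smul_eq_mul,
      mul_sum, mul_comm (∏ c ∈ s, f c), add_comm]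
    congr 1
    refine sum_congr rfl fun b hb => ?_
    rw [erase_insert_of_ne (ne_of_mem_of_not_mem hb ha).symm,
      prod_insert fun h => ha (mem_of_mem_erase h)]
    ring

variable {m : Type*} [Fintype m] [DecidableEq m]

theorem map_det_eq_sum_det_updateRow (M : Matrix m m R) :
    D M.det = ∑ r, (M.updateRow r fun c => D (M r c)).det := by
  simp only [det_apply']
  rw [sum_comm, map_sum]
  refine sum_congr rfl fun σ _ => ?_
  have hsign : D ((Equiv.Perm.sign σ : ℤ) : R) = 0 := D.map_intCast _
  rw [D.leibniz, hsign, smul_zero, add_zero, leibniz_finset_prod, smul_eq_mul, mul_sum,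
    ← Equiv.sum_comp σ fun r => (Equiv.Perm.sign σ : ℤ) *
      ∏ j, (M.updateRow r fun c => D (M r c)) (σ j) j]
  refine sum_congr rfl fun i _ => ?_
  rw [← mul_prod_erase univ _ (mem_univ i), updateRow_self]
  congr 2
  refine prod_congr rfl fun j hj => ?_
  rw [updateRow_ne fun h => ne_of_mem_erase hj (σ.injective h)]

theorem map_det (M : Matrix m m R) : D M.det = ∑ a, ∑ b, D (M a b) * adjugate M b a := by
  rw [map_det_eq_sum_det_updateRow]
  refine sum_congr rfl fun a _ => ?_
  rw [← cramer_transpose_apply, cramer_eq_adjugate_mulVec, ← adjugate_transpose]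
  simp only [mulVec, dotProduct, transpose_apply, mul_comm]

omit [DecidableEq m] in
theorem map_matrix_mul (A B : Matrix m m R) : (A * B).map D = A.map D * B + A * B.map D := by
  ext a b
  simp only [Matrix.map_apply, mul_apply, Matrix.add_apply, map_sum, D.leibniz, smul_eq_mul,
    sum_add_distrib]
  rw [add_comm]
  congr 1
  exact sum_congr rfl fun c _ => mul_comm _ _

omit [Fintype m] in
theorem map_smul_one (r : R) : (r • (1 : Matrix m m R)).map D = D r • 1 := by
  ext a b
  by_cases h : a = b <;> simp [h]

theorem det_smul_map_adjugate (M : Matrix m m R) :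
    M.det • (adjugate M).map D = D M.det • adjugate M - adjugate M * M.map D * adjugate M := by
  have h := congr($(D.map_matrix_mul (adjugate M) M) * adjugate M)
  rw [adjugate_mul, map_smul_one, Matrix.add_mul, Matrix.mul_assoc, mul_adjugate, smul_mul,
    Matrix.one_mul, Matrix.mul_smul, Matrix.mul_one] at h
  rw [h, add_sub_cancel_right]

end Derivation

section CyclicSum

variable {S R : Type*} [CommRing S] [CommRing R] [Algebra S R]
variable {m : Type*} [Fintype m] [DecidableEq m]
variable {M : Matrix m m R} {D : m → Derivation S R R} {v : m → R}

/-- The condition `∂ᵢ M = eᵢ vᵀ + v eᵢᵀ`. -/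
def IsRankTwoDerivative (M : Matrix m m R) (D : m → Derivation S R R) (v : m → R) : Prop :=
  ∀ i a b, D i (M a b) = (if a = i then v b else 0) + (if b = i then v a else 0)

theorem map_det_eq_two_mul_adjugate_mulVec (hM : M.IsSymm) (hD : IsRankTwoDerivative M D v)
    (i : m) : D i M.det = 2 * (adjugate M *ᵥ v) i := by
  have hA := hM.adjugate
  simp only [Derivation.map_det, hD i, add_mul, ite_mul, zero_mul, sum_add_distrib,
    sum_ite_irrel, sum_const_zero, sum_ite_eq', mem_univ, if_true, mulVec, dotProduct]
  simp only [hA.apply _ i, mul_comm (v _)]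
  ring

theorem adjugate_mul_map_mul_adjugate_apply (hM : M.IsSymm) (hD : IsRankTwoDerivative M D v)
    (i j k : m) : (adjugate M * M.map (D i) * adjugate M) j k
      = adjugate M j i * (adjugate M *ᵥ v) k + (adjugate M *ᵥ v) j * adjugate M i k := by
  simp only [mul_apply, Matrix.map_apply, hD i, mul_add, add_mul, mul_ite, ite_mul, mul_zero,
    zero_mul, sum_add_distrib, sum_ite_irrel, sum_const_zero, sum_ite_eq', mem_univ, if_true,
    mulVec, dotProduct]
  rw [mul_sum]
  congr 1
  exact sum_congr rfl fun x _ => by rw [hM.adjugate.apply k x]; ring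

theorem det_mul_map_adjugate_apply (hM : M.IsSymm) (hD : IsRankTwoDerivative M D v)
    (i j k : m) : M.det * D i (adjugate M j k) = 2 * (adjugate M *ᵥ v) i * adjugate M j k
      - (adjugate M j i * (adjugate M *ᵥ v) k + (adjugate M *ᵥ v) j * adjugate M i k) := by
  simpa [map_det_eq_two_mul_adjugate_mulVec hM hD, adjugate_mul_map_mul_adjugate_apply hM hD]
    using congr($((D i).det_smul_map_adjugate M) j k)

theorem cyclic_sum_map_adjugate_eq_zero [IsDomain R] (hM : M.IsSymm) (hdet : M.det ≠ 0)
    (hD : IsRankTwoDerivative M D v) (i j k : m) :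
    D i (adjugate M j k) + D j (adjugate M k i) + D k (adjugate M i j) = 0 := by
  refine mul_left_cancel₀ hdet ?_
  have hA := hM.adjugate
  rw [mul_zero, mul_add, mul_add, det_mul_map_adjugate_apply hM hD,
    det_mul_map_adjugate_apply hM hD, det_mul_map_adjugate_apply hM hD, hA.apply i j,
    hA.apply j k, hA.apply k i]
  ring

end CyclicSum

section PolynomialFDeriv

variable {A ι τ : Type*} [CommRing A] [Algebra ℝ A] [Fintype ι] [DecidableEq ι]

open MvPolynomial in
theorem hasFDerivAt_aeval_sumElim (c : τ → A) (P : MvPolynomial (ι ⊕ τ) ℝ)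
    (L : A →ₗ[ℝ] ℝ) (q : ι → ℝ) :
    HasFDerivAt (fun w => L (aeval (Sum.elim (algebraMap ℝ A ∘ w) c) P))
      (∑ i, L (aeval (Sum.elim (algebraMap ℝ A ∘ q) c) (pderiv (Sum.inl i) P)) •
        (ContinuousLinearMap.proj i : (ι → ℝ) →L[ℝ] ℝ)) q := by
  -- Generalizing over `L` absorbs a constant factor `c t` into `L ∘ (· * c t)`.
  induction P using MvPolynomial.induction_on generalizing L with
  | C r => simpa using hasFDerivAt_const (L (algebraMap ℝ A r)) q
  | add P P' hP hP' =>
    simpa only [map_add, add_smul, sum_add_distrib] using (hP L).fun_add (hP' L)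
  | mul_X P x hP =>
    cases x with
    | inl i₀ =>
      have hproj : HasFDerivAt (fun w : ι → ℝ => w i₀)
          (ContinuousLinearMap.proj i₀ : (ι → ℝ) →L[ℝ] ℝ) q := hasFDerivAt_apply i₀ q
      have hf : (fun w => L (aeval (Sum.elim (algebraMap ℝ A ∘ w) c) (P * X (Sum.inl i₀))))
          = fun w => w i₀ * L (aeval (Sum.elim (algebraMap ℝ A ∘ w) c) P) := by
        ext w
        simp [Algebra.algebraMap_eq_smul_one, mul_comm]
      rw [hf]
      refine (hproj.mul (hP L)).congr_fderiv ?_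
      ext x
      classical
      simp [pderiv_X, Pi.single_apply, Algebra.algebraMap_eq_smul_one, add_mul,
        sum_add_distrib, mul_sum, apply_ite, ite_mul, mul_assoc, add_comm]
    | inr t =>
      simpa [pderiv_X_of_ne, mul_comm (c t)] using hP (L ∘ₗ LinearMap.mulRight ℝ (c t))

open MvPolynomial in
theorem fderiv_aeval_sumElim_single (c : τ → A) (P : MvPolynomial (ι ⊕ τ) ℝ)
    (L : A →ₗ[ℝ] ℝ) (q : ι → ℝ) (i : ι) :
    fderiv ℝ (fun w => L (aeval (Sum.elim (algebraMap ℝ A ∘ w) c) P)) q (Pi.single i 1)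
      = L (aeval (Sum.elim (algebraMap ℝ A ∘ q) c) (pderiv (Sum.inl i) P)) := by
  simp [(hasFDerivAt_aeval_sumElim c P L q).fderiv, Pi.single_apply]

end PolynomialFDeriv

section QuadricMatrix

variable {R : Type*} [CommRing R] {ι : Type*}

/-- `a q qᵀ + b qᵀ + q bᵀ + c`. -/
def quadricMatrix (a : R) (b : ι → R) (c : Matrix ι ι R) (q : ι → R) : Matrix ι ι R :=
  of fun i j => a * q i * q j + b i * q j + q i * b j + c i j

theorem quadricMatrix_isSymm (a : R) (b q : ι → R) {c : Matrix ι ι R} (hc : c.IsSymm) :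
    (quadricMatrix a b c q).IsSymm := by
  ext i j
  simp only [quadricMatrix, transpose_apply, of_apply, hc.apply]
  ring

theorem isRankTwoDerivative_quadricMatrix [DecidableEq ι] {S : Type*} [CommRing S] [Algebra S R]
    {D : ι → Derivation S R R} {a : R} {b q : ι → R} {c : Matrix ι ι R}
    (ha : ∀ i, D i a = 0) (hb : ∀ i k, D i (b k) = 0) (hc : ∀ i k l, D i (c k l) = 0)
    (hq : ∀ i k, D i (q k) = if k = i then 1 else 0) :
    IsRankTwoDerivative (quadricMatrix a b c q) D (fun k => a * q k + b k) := by
  intro i k l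
  simp only [quadricMatrix, of_apply, map_add, Derivation.leibniz, ha, hb, hc, hq, smul_eq_mul]
  split_ifs <;> ring

end QuadricMatrix

/-- Indeterminates for the coefficients `a`, `b`, `c` of a quadric matrix; `c` is indexed by
unordered pairs so that the generic coefficient matrix is symmetric. -/
inductive QuadricCoeff (ι : Type*)
  | a
  | b (i : ι)
  | c (s : Sym2 ι)

section GenericQuadric

open MvPolynomial

variable (ι K : Type*) [CommRing K]

noncomputable def genericQuadric : Matrix ι ι (MvPolynomial (ι ⊕ QuadricCoeff ι) K) :=
  quadricMatrix (X (.inr .a)) (fun i => X (.inr (.b i))) (of fun i j => X (.inr (.c s(i, j))))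
    (fun i => X (.inl i))

variable {ι K}

theorem genericQuadric_isSymm : (genericQuadric ι K).IsSymm :=
  quadricMatrix_isSymm _ _ _ <| by ext i j; simp [Sym2.eq_swap]

theorem det_genericQuadric_ne_zero [Fintype ι] [DecidableEq ι] [Nontrivial K] :
    (genericQuadric ι K).det ≠ 0 := by
  let diag : QuadricCoeff ι → K
    | .c s => if s.IsDiag then 1 else 0
    | _ => 0
  have h : (genericQuadric ι K).map (eval (Sum.elim 0 diag)) = 1 := by
    ext i j
    simp [genericQuadric, quadricMatrix, diag, one_apply]
  intro h0
  have := RingHom.map_det (eval (Sum.elim 0 diag)) (genericQuadric ι K)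
  rw [h0, map_zero, RingHom.mapMatrix_apply, h, det_one] at this
  exact zero_ne_one this

theorem isRankTwoDerivative_genericQuadric [DecidableEq ι] :
    IsRankTwoDerivative (genericQuadric ι K) (fun i => pderiv (.inl i))
      (fun k => X (.inr .a) * X (.inl k) + X (.inr (.b k))) :=
  isRankTwoDerivative_quadricMatrix (fun i => pderiv_X_of_ne (by simp))
    (fun i k => pderiv_X_of_ne (by simp)) (fun i k l => pderiv_X_of_ne (by simp))
    fun i k => by
      split_ifs with h
      · rw [h, pderiv_X_self]
      · exact pderiv_X_of_ne (by simpa using h)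

theorem cyclic_sum_pderiv_adjugate_genericQuadric [Fintype ι] [DecidableEq ι] [IsDomain K]
    (i j k : ι) :
    pderiv (.inl i) (adjugate (genericQuadric ι K) j k)
      + pderiv (.inl j) (adjugate (genericQuadric ι K) k i)
      + pderiv (.inl k) (adjugate (genericQuadric ι K) i j) = 0 :=
  cyclic_sum_map_adjugate_eq_zero genericQuadric_isSymm det_genericQuadric_ne_zero
    isRankTwoDerivative_genericQuadric i j k

end GenericQuadric

section Specialization

variable {ι R : Type*} [CommRing R]

def QuadricCoeff.eval (a : R) (b : ι → R) {c : Matrix ι ι R} (hc : c.IsSymm) :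
    QuadricCoeff ι → R
  | .a => a
  | .b i => b i
  | .c s => Sym2.lift ⟨c, fun i j => hc.apply j i⟩ s

open MvPolynomial in
theorem genericQuadric_map_aeval {K : Type*} [CommRing K] [Algebra K R]
    (a : R) (b q : ι → R) {c : Matrix ι ι R} (hc : c.IsSymm) :
    (genericQuadric ι K).map (aeval (Sum.elim q (QuadricCoeff.eval a b hc)))
      = quadricMatrix a b c q := by
  ext i j
  simp [genericQuadric, quadricMatrix, QuadricCoeff.eval]

theorem pencilMat_eq_quadricMatrix {n : ℕ} (α αt : ℝ) (β βt : Fin n → ℝ)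
    (γ γt : Matrix (Fin n) (Fin n) ℝ) (w : Fin n → ℝ) :
    pencilMat α αt β βt γ γt w
      = quadricMatrix (C αt + C α * X) (fun i => C (βt i) + C (β i) * X)
        (of fun i j => C (γt i j) + C (γ i j) * X) (algebraMap ℝ ℝ[X] ∘ w) := by
  ext i j : 1
  simp only [pencilMat, Gmat, quadricMatrix, Matrix.add_apply, Matrix.map_apply, of_apply,
    Function.comp_apply, algebraMap_eq, map_add, map_mul]
  ring

theorem pencilCoeff_isSymm {n : ℕ} {γ γt : Matrix (Fin n) (Fin n) ℝ} (hγ : γ.IsSymm)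
    (hγt : γt.IsSymm) :
    (of fun i j => C (γt i j) + C (γ i j) * X : Matrix (Fin n) (Fin n) ℝ[X]).IsSymm := by
  ext i j
  simp [hγ.apply, hγt.apply]

theorem Amat_apply_eq_lcoeff {n : ℕ} {α αt : ℝ} {β βt : Fin n → ℝ}
    {γ γt : Matrix (Fin n) (Fin n) ℝ} (hγ : γ.IsSymm) (hγt : γt.IsSymm) (r : ℕ)
    (w : Fin n → ℝ) (j k : Fin n) :
    Amat α αt β βt γ γt r w j k = lcoeff ℝ (n - r) (MvPolynomial.aeval (Sum.elim
      (algebraMap ℝ ℝ[X] ∘ w) (QuadricCoeff.eval (C αt + C α * X)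
        (fun i => C (βt i) + C (β i) * X) (pencilCoeff_isSymm hγ hγt)))
      (adjugate (genericQuadric (Fin n) ℝ) j k)) := by
  rw [Amat, of_apply, pencilMat_eq_quadricMatrix,
    ← genericQuadric_map_aeval (K := ℝ) _ _ _ (pencilCoeff_isSymm hγ hγt),
    ← AlgHom.mapMatrix_apply, ← AlgHom.map_adjugate]
  rfl

end Specialization

/-- STATEMENT 18: every coefficient matrix `A_r` of `adjugate(G̃ + tG)` is a
Killing matrix: symmetric and
`∂_i (A_r)_{jk} + ∂_j (A_r)_{ki} + ∂_k (A_r)_{ij} = 0` for all `i, j, k`. -/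
theorem stmt18 (n : ℕ) (α αt : ℝ) (β βt : Fin n → ℝ)
    (γ γt : Matrix (Fin n) (Fin n) ℝ) (hγ : γ.IsSymm) (hγt : γt.IsSymm) :
    ∀ r ∈ Finset.Icc 1 n,
      (∀ q : Fin n → ℝ, (Amat α αt β βt γ γt r q).IsSymm)
      ∧ ∀ (q : Fin n → ℝ) (i j k : Fin n),
          fderiv ℝ (fun w => Amat α αt β βt γ γt r w j k) q (Pi.single i 1)
            + fderiv ℝ (fun w => Amat α αt β βt γ γt r w k i) q (Pi.single j 1)
            + fderiv ℝ (fun w => Amat α αt β βt γ γt r w i j) q (Pi.single k 1)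
          = 0 := by
  intro r _
  refine ⟨fun q => ?_, fun q i j k => ?_⟩
  · ext j k
    simp only [transpose_apply, Amat_apply_eq_lcoeff hγ hγt, genericQuadric_isSymm.adjugate.apply]
  · simp only [Amat_apply_eq_lcoeff hγ hγt, fderiv_aeval_sumElim_single, ← map_add,
      cyclic_sum_pderiv_adjugate_genericQuadric, map_zero]
end
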